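/- Let α satisfy φ < α < 2, where φ = (1 + √5)/2 is the golden ratio. Let A, B, C, a, b, k be positive integers such that k ≤ k₀(α) + 1 and (2^k·(2α − 1)/(α − 1))·C ≥ A + B + C. Then A·(d_α + c_α·log₂ a) + B·(d_α + c_α·log₂ b) + k·C + 2B + A ≤ A·(d_α − 1 + c_α·log₂ a) + (B + C)·(d_α − 1 + c_α·log₂(b + 1)). -/

import Mathlib

open Real

/-- The constant `c_α = (α+1)/((α+1)·log₂(α+1) − α·log₂ α)`. -/
noncomputable def cA (α : ℝ) : ℝ :=
  (α + 1) / ((α + 1) * logb 2 (α + 1) - α * logb 2 α)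

/-- `k₀(α)` is the least `ℓ ∈ ℕ` such that `(α² − α − 1)/(α − 1) ≥ α^(−ℓ)`. -/
noncomputable def k0 (α : ℝ) : ℕ :=
  sInf {ℓ : ℕ | (α ^ 2 - α - 1) / (α - 1) ≥ α ^ (-(ℓ : ℝ))}

/-- The constant `d_α = 2^(k₀(α)+1)·max{k₀(α)+1, 3}·(2α − 1)/(α − 1) + 1`. -/
noncomputable def dA (α : ℝ) : ℝ :=
  2 ^ (k0 α + 1) * max ((k0 α : ℝ) + 1) 3 * (2 * α - 1) / (α - 1) + 1

/-!
Since `c_α ≥ 0` and `log b ≤ log (b + 1)`, the logarithmic terms on the left are dominated by those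
on the right, and the claim reduces to `2A + 3B + kC ≤ (d_α − 1)·C`. The hypothesis bounds
`A + B` by `(2^k R − 1)·C` with `R = (2α − 1)/(α − 1) ≥ 1`, so it suffices that
`k + 3(2^k R − 1) ≤ d_α − 1 = 2^(k₀+1)·max{k₀+1, 3}·R`, which holds because `k ≤ k₀ + 1`.
-/

lemma cA_nonneg {α : ℝ} (hα : 0 ≤ α) : 0 ≤ cA α := by
  have hlog_mono : logb 2 α ≤ logb 2 (α + 1) := by
    rcases hα.eq_or_lt with rfl | hpos
    · simp
    · exact logb_le_logb_of_le one_lt_two hpos (by linarith)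
  have hlog_succ : 0 ≤ logb 2 (α + 1) := logb_nonneg one_lt_two (by linarith)
  refine div_nonneg (by linarith) ?_
  nlinarith [mul_le_mul_of_nonneg_left hlog_mono hα]

lemma logb_natCast_le_logb_succ (b : ℕ) : logb 2 (b : ℝ) ≤ logb 2 ((b : ℝ) + 1) := by
  rcases b.eq_zero_or_pos with rfl | hb
  · simp
  · exact logb_le_logb_of_le one_lt_two (by exact_mod_cast hb) (by linarith)

lemma add_three_mul_sub_one_le_mul {k M x y : ℝ} (hkM : k ≤ M) (h3M : 3 ≤ M) (hxy : x ≤ y)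
    (hy : 1 ≤ y) : k + 3 * (x - 1) ≤ M * y := by
  nlinarith [mul_nonneg (sub_nonneg.2 h3M) (sub_nonneg.2 hy)]

lemma natCast_add_three_mul_le_dA_sub_one {α : ℝ} (hα : 1 < α) {k : ℕ} (hk : k ≤ k0 α + 1) :
    (k : ℝ) + 3 * (2 ^ k * ((2 * α - 1) / (α - 1)) - 1) ≤ dA α - 1 := by
  have hR : 1 ≤ (2 * α - 1) / (α - 1) := by
    rw [le_div_iff₀ (by linarith)]
    linarith
  have hdA : dA α - 1 = max ((k0 α : ℝ) + 1) 3 * (2 ^ (k0 α + 1) * ((2 * α - 1) / (α - 1))) := by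
    rw [dA]
    ring
  rw [hdA]
  refine add_three_mul_sub_one_le_mul ?_ (le_max_right _ _) ?_ ?_
  · exact le_max_of_le_left (by exact_mod_cast hk)
  · gcongr
    exact one_le_two
  · nlinarith [one_le_pow₀ (one_le_two : (1 : ℝ) ≤ 2) (n := k0 α + 1)]

lemma two_mul_add_three_mul_add_le_dA_sub_one_mul {α : ℝ} (hα : 1 < α) {A B C k : ℕ}
    (hk : k ≤ k0 α + 1) (h : (A : ℝ) + B + C ≤ 2 ^ k * (2 * α - 1) / (α - 1) * C) :
    2 * (A : ℝ) + 3 * B + k * C ≤ (dA α - 1) * C := by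
  have hkey := mul_le_mul_of_nonneg_right (natCast_add_three_mul_le_dA_sub_one hα hk)
    (Nat.cast_nonneg C)
  rw [mul_div_assoc] at h
  linarith [(Nat.cast_nonneg A : (0 : ℝ) ≤ A)]

theorem alphamerge_CD (α : ℝ) (hφ : (1 + Real.sqrt 5) / 2 < α)
    (A B C a b k : ℕ)
    (hk0 : k ≤ k0 α + 1)
    (h1 : (A : ℝ) + B + C ≤ 2 ^ k * (2 * α - 1) / (α - 1) * C) :
    (A : ℝ) * (dA α + cA α * logb 2 a) + (B : ℝ) * (dA α + cA α * logb 2 b)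
        + (k : ℝ) * C + 2 * B + A
      ≤ (A : ℝ) * (dA α - 1 + cA α * logb 2 a)
        + ((B : ℝ) + C) * (dA α - 1 + cA α * logb 2 ((b : ℝ) + 1)) := by
  have hα : 1 < α := one_lt_goldenRatio.trans hφ
  have hc := cA_nonneg (by linarith : 0 ≤ α)
  have hlog_succ : 0 ≤ logb 2 ((b : ℝ) + 1) := logb_nonneg one_lt_two (by simp)
  have hB_log : (B : ℝ) * (cA α * logb 2 b) ≤ B * (cA α * logb 2 ((b : ℝ) + 1)) :=
    mul_le_mul_of_nonneg_left (mul_le_mul_of_nonneg_left (logb_natCast_le_logb_succ b) hc)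
      (Nat.cast_nonneg B)
  have hC_log : 0 ≤ (C : ℝ) * (cA α * logb 2 ((b : ℝ) + 1)) := by positivity
  linarith [two_mul_add_three_mul_add_le_dA_sub_one_mul hα hk0 h1]
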